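/- arXiv:math/0610342 — 4 statements merged into one kernel-verified Lean document; each statement's English description precedes it below -/
import Mathlib

section
/- Let 𝓔 be a directed graph, S_𝓔 its graph inverse semigroup, and 𝔽 the free group on the edge set 𝓔¹. The map φ : S_𝓔 \ {0} → 𝔽 defined by φ((μ,ν)) = red(μ ν⁻¹) (the reduced word obtained from the word for μ followed by the inverse of the word for ν) is a grading of S_𝓔 by 𝔽: whenever (μ,ν)(α,β) ≠ 0, φ((μ,ν)(α,β)) = φ((μ,ν))·φ((α,β)). Moreover φ is idempotent pure: φ((μ,ν)) = 1 if and only if μ = ν. -/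
/-- `pathOk src tgt v l` : `l` is a directed path starting at `v`. -/
def pathOk {V E : Type*} (src tgt : E → V) : V → List E → Prop
  | _, [] => True
  | v, e :: l => src e = v ∧ pathOk src tgt (tgt e) l

/-- The endpoint of the path `l` starting at `v`. -/
def pend {V E : Type*} (tgt : E → V) (v : V) (l : List E) : V :=
  l.foldl (fun _ e => tgt e) v

/-- The (automatically reduced) word in the free group on the edge set
determined by a path `μ = μ_n ⋯ μ_1`, recorded as its traversal-order list
`[μ_1, …, μ_n]`; the word is `μ_n ⋯ μ_1`. -/
def wordOf {E : Type*} (l : List E) : FreeGroup E :=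
  (l.reverse.map FreeGroup.of).prod

lemma wordOf_append {E : Type*} (l β : List E) :
    wordOf (l ++ β) = wordOf β * wordOf l := by
  simp [wordOf, List.reverse_append]

lemma wordOf_eq_mk {E : Type*} (l : List E) :
    wordOf l = FreeGroup.mk (l.reverse.map (·, true)) := by
  induction l with
  | nil => rfl
  | cons e l ih =>
    have : wordOf (e :: l) = wordOf l * FreeGroup.of e := by
      simp [wordOf]
    rw [this, ih, FreeGroup.of, FreeGroup.mul_mk]
    simp

lemma reduce_pos {E : Type*} [DecidableEq E] (L : List E) :
    FreeGroup.reduce (L.map (·, true)) = L.map (·, true) := by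
  induction L with
  | nil => simp
  | cons a L ih =>
    rw [List.map_cons, FreeGroup.reduce.cons, ih]
    cases L <;> simp

lemma wordOf_injective {E : Type*} : Function.Injective (wordOf (E := E)) := by
  classical
  intro μ ν h
  rw [wordOf_eq_mk, wordOf_eq_mk] at h
  have h2 := congrArg FreeGroup.toWord h
  rw [FreeGroup.toWord_mk, FreeGroup.toWord_mk, reduce_pos, reduce_pos] at h2
  have h3 : μ.reverse = ν.reverse := by
    have : Function.Injective (fun e : E => ((e, true) : E × Bool)) := by
      intro a b hab; simpa using hab
    exact List.map_injective_iff.2 this h2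
  simpa using congrArg List.reverse h3

/-- The map `φ((μ,ν)) = red(μ ν⁻¹)` is a grading of the graph inverse semigroup
`S_𝓔` by the free group `𝔽` on the edge set: whenever `(μ,ν)(α,β) ≠ 0`
(the two cases being `ν = αν'`, with product `(μ, βν')`, and `α = να'`, with
product `(μα', β)`), one has `φ((μ,ν)(α,β)) = φ((μ,ν)) φ((α,β))`.
Moreover `φ` is idempotent pure: `φ((μ,ν)) = 1` iff `μ = ν`. -/
theorem stmt_7 {V E : Type*} (src tgt : E → V) :
    (∀ (v w : V) (μ ν α β l : List E),
        pathOk src tgt v μ → pathOk src tgt v ν →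
        pathOk src tgt w α → pathOk src tgt w β →
        ν = l ++ α → pend tgt v l = w →
        wordOf μ * (wordOf (l ++ β))⁻¹
          = (wordOf μ * (wordOf ν)⁻¹) * (wordOf α * (wordOf β)⁻¹)) ∧
    (∀ (v w : V) (μ ν α β l : List E),
        pathOk src tgt v μ → pathOk src tgt v ν →
        pathOk src tgt w α → pathOk src tgt w β →
        α = l ++ ν → pend tgt w l = v →
        wordOf (l ++ μ) * (wordOf β)⁻¹
          = (wordOf μ * (wordOf ν)⁻¹) * (wordOf α * (wordOf β)⁻¹)) ∧
    (∀ (v : V) (μ ν : List E), pathOk src tgt v μ → pathOk src tgt v ν →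
        (wordOf μ * (wordOf ν)⁻¹ = 1 ↔ μ = ν)) := by
  refine ⟨?_, ?_, ?_⟩
  · intro v w μ ν α β l _ _ _ _ hν _
    subst hν
    rw [wordOf_append, wordOf_append]
    group
  · intro v w μ ν α β l _ _ _ _ hα _
    subst hα
    rw [wordOf_append, wordOf_append]
    group
  · intro v μ ν _ _
    rw [mul_inv_eq_one]
    exact wordOf_injective.eq_iff
end

section
/- Let φ : S → G be a homomorphism of an inverse semigroup S onto a group G with H = φ⁻¹(1_G), and let ε : ℂS → ℂH be the restriction map (ε(Σ α_s s) = Σ_{h∈H} α_h h). Then for every f ∈ ℂS, ε(f* f) is a positive element of ℂS, i.e. a finite sum of elements of the form g* g with g ∈ ℂS. -/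
/-- Convolution product on the complex semigroup algebra `ℂS`
(finitely supported functions `S →₀ ℂ`). -/
noncomputable def cmul {S : Type*} [Semigroup S] (f g : S →₀ ℂ) : S →₀ ℂ :=
  f.sum fun s a => g.sum fun t b => Finsupp.single (s * t) (a * b)

/-- The involution `f* = Σ conj(f(s)) s*` on `ℂS`. -/
noncomputable def cstar {S : Type*} [Semigroup S] (star : S → S) (f : S →₀ ℂ) :
    S →₀ ℂ :=
  f.sum fun s a => Finsupp.single (star s) ((starRingEnd ℂ) a)

/- The restriction map `ε : ℂS → ℂH`, `ε(Σ α_s s) = Σ_{s ∈ H} α_s s`,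
for `H = {s : p s}`. -/
open Classical in
noncomputable def ceps {S : Type*} [Semigroup S] (p : S → Prop) (f : S →₀ ℂ) :
    S →₀ ℂ :=
  f.sum fun s a => if p s then Finsupp.single s a else 0

/-! Since `s * s* * s = s`, the map `φ` sends `s*` to `(φ s)⁻¹`, so the monomial `s* t` lies in
`H` exactly when `φ s = φ t`. Hence `ε(f* f)` keeps precisely the products of terms of `f` lying in
a common fibre of `φ`, i.e. `ε(f* f) = Σ_c f_c* f_c` where `f_c` is the restriction of `f` to
`φ⁻¹(c)`. -/

section

variable {S : Type*} [Semigroup S] (star : S → S)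

lemma cmul_cstar_self (f : S →₀ ℂ) :
    cmul (cstar star f) f
      = ∑ s ∈ f.support, ∑ t ∈ f.support,
          Finsupp.single (star s * t) (starRingEnd ℂ (f s) * f t) := by
  unfold cmul cstar
  rw [Finsupp.sum_sum_index (fun _ => by simp) fun _ _ _ => by
    simp [add_mul, Finsupp.single_add, Finset.sum_add_distrib, Finsupp.sum]]
  refine Finset.sum_congr rfl fun s _ => ?_
  dsimp only
  rw [Finsupp.sum_single_index (by simp)]
  rfl

lemma cmul_cstar_filter_self (q : S → Prop) [DecidablePred q] (f : S →₀ ℂ) :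
    cmul (cstar star (f.filter q)) (f.filter q)
      = ∑ s ∈ f.support with q s, ∑ t ∈ f.support with q t,
          Finsupp.single (star s * t) (starRingEnd ℂ (f s) * f t) := by
  rw [cmul_cstar_self, Finsupp.support_filter]
  refine Finset.sum_congr rfl fun s hs => Finset.sum_congr rfl fun t ht => ?_
  rw [Finsupp.filter_apply_pos _ _ (Finset.mem_filter.1 hs).2,
    Finsupp.filter_apply_pos _ _ (Finset.mem_filter.1 ht).2]

open Classical in
lemma ceps_eq_filter (p : S → Prop) (f : S →₀ ℂ) : ceps p f = f.filter p := by
  rw [Finsupp.filter_eq_sum, Finset.sum_filter]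
  rfl

open Classical in
lemma ceps_cmul_cstar_self (p : S → Prop) (f : S →₀ ℂ) :
    ceps p (cmul (cstar star f) f)
      = ∑ s ∈ f.support, ∑ t ∈ f.support with p (star s * t),
          Finsupp.single (star s * t) (starRingEnd ℂ (f s) * f t) := by
  rw [ceps_eq_filter, cmul_cstar_self, Finsupp.filter_sum]
  refine Finset.sum_congr rfl fun s _ => ?_
  rw [Finsupp.filter_sum, Finset.sum_filter]
  refine Finset.sum_congr rfl fun t _ => ?_
  split_ifs with h
  · exact Finsupp.filter_single_of_pos _ h
  · exact Finsupp.filter_single_of_neg _ h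

lemma ceps_cmul_cstar_self_eq_sum_fibers {κ : Type*} [DecidableEq κ] (p : S → Prop) (d : S → κ)
    (hd : ∀ s t, p (star s * t) ↔ d t = d s) (f : S →₀ ℂ) :
    ceps p (cmul (cstar star f) f)
      = ∑ c ∈ f.support.image d, cmul (cstar star (f.filter (d · = c))) (f.filter (d · = c)) := by
  rw [ceps_cmul_cstar_self]
  refine (Finset.sum_image' _ fun s _ => ?_).symm
  rw [cmul_cstar_filter_self]
  simp_rw [hd]
  refine Finset.sum_congr rfl fun s' hs' => ?_
  rw [(Finset.mem_filter.1 hs').2]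

end

lemma map_eq_inv_of_mul_mul_eq {S G : Type*} [Semigroup S] [Group G] (φ : S → G)
    (hφ : ∀ a b, φ (a * b) = φ a * φ b) {s t : S} (h : s * t * s = s) : φ t = (φ s)⁻¹ := by
  have : φ s * φ t * φ s = φ s := by rw [← hφ, ← hφ, h]
  exact eq_inv_of_mul_eq_one_right (mul_eq_right.1 this)

lemma Finset.exists_fin_sum_eq {ι M : Type*} [AddCommMonoid M] (T : Finset ι) (F : ι → M) :
    ∃ (n : ℕ) (g : Fin n → ι), ∑ c ∈ T, F c = ∑ i, F (g i) :=
  ⟨T.card, fun i => T.equivFin.symm i,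
    (Finset.sum_attach T F).symm.trans (Fintype.sum_equiv T.equivFin _ _ fun _ => by simp)⟩

theorem stmt_10_general {S G : Type*} [Semigroup S] [Group G] (star : S → S)
    (hst1 : ∀ s, s * star s * s = s)
    (φ : S → G) (hhom : ∀ a b : S, φ (a * b) = φ a * φ b) :
    ∀ f : S →₀ ℂ, ∃ (n : ℕ) (g : Fin n → (S →₀ ℂ)),
      ceps (fun s => φ s = 1) (cmul (cstar star f) f)
        = ∑ i, cmul (cstar star (g i)) (g i) := by
  classical
  intro f
  have hfiber : ∀ s t, φ (star s * t) = 1 ↔ φ t = φ s := fun s t => by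
    rw [hhom, map_eq_inv_of_mul_mul_eq φ hhom (hst1 s), inv_mul_eq_one, eq_comm]
  obtain ⟨n, c, hc⟩ := (f.support.image φ).exists_fin_sum_eq
    fun c => cmul (cstar star (f.filter (φ · = c))) (f.filter (φ · = c))
  exact ⟨n, fun i => f.filter (φ · = c i),
    (ceps_cmul_cstar_self_eq_sum_fibers star _ φ hfiber f).trans hc⟩

/-- Let `φ : S → G` be a homomorphism of an inverse semigroup `S` onto a group
`G`, `H = φ⁻¹(1)`, and `ε : ℂS → ℂH` the restriction map.  Then for every
`f ∈ ℂS`, `ε(f* f)` is a positive element of `ℂS`: a finite sum of elements of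
the form `g* g` with `g ∈ ℂS`. -/
theorem stmt_10 {S G : Type*} [Semigroup S] [Group G] (star : S → S)
    (hst1 : ∀ s, s * star s * s = s)
    (hst2 : ∀ s, star s * s * star s = star s)
    (hstUniq : ∀ s t : S, s * t * s = s → t * s * t = t → t = star s)
    (φ : S → G) (hhom : ∀ a b : S, φ (a * b) = φ a * φ b)
    (hsurj : Function.Surjective φ) :
    ∀ f : S →₀ ℂ, ∃ (n : ℕ) (g : Fin n → (S →₀ ℂ)),
      ceps (fun s => φ s = 1) (cmul (cstar star f) f)
        = ∑ i, cmul (cstar star (g i)) (g i) :=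
  stmt_10_general star hst1 φ hhom
end

section
/- Let φ : S → G be a homomorphism of an inverse semigroup S onto a group G with H = φ⁻¹(1_G). Suppose for each g ∈ G there exists s_g ∈ S with φ⁻¹(g) = s_g H. Then for every f ∈ ℂS supported on S_g = φ⁻¹(g), setting f' = Σ_{s∈S_g} f(s) s_g* s_g h_s ∈ ℂH (where s = s_g h_s with h_s ∈ H), one has f'* f' = f* f; hence the restriction map ε : ℂS → ℂH is positive. -/
set_option linter.unusedSectionVars false

/-! ### Inverse semigroup lemmas -/

section InvSemigroup
variable {S : Type*} [Semigroup S] (st : S → S)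
variable (hst1 : ∀ s, s * st s * s = s)
variable (hst2 : ∀ s, st s * s * st s = st s)
variable (hstUniq : ∀ s t : S, s * t * s = s → t * s * t = t → t = st s)
include hst1 hst2 hstUniq

lemma aux_star_star (s : S) : st (st s) = s :=
  (hstUniq (st s) s (hst2 s) (hst1 s)).symm

lemma aux_star_idem {e : S} (he : e * e = e) : st e = e :=
  (hstUniq e e (by rw [he, he]) (by rw [he, he])).symm

lemma aux_mul_idem {e f : S} (he : e * e = e) (hf : f * f = f) :
    (e * f) * (e * f) = e * f := by
  set x := st (e * f) with hx
  have hx1 : (e * f) * x * (e * f) = e * f := hst1 _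
  have hx2 : x * (e * f) * x = x := hst2 _
  have he' : ∀ z : S, e * (e * z) = e * z := fun z => by rw [← mul_assoc, he]
  have hf' : ∀ z : S, f * (f * z) = f * z := fun z => by rw [← mul_assoc, hf]
  have key : f * (x * e) = x := by
    refine (hstUniq (e * f) (f * (x * e)) ?_ ?_).trans hx.symm
    · calc e * f * (f * (x * e)) * (e * f)
          = e * (f * (f * (x * (e * (e * f))))) := by simp only [mul_assoc]
        _ = e * (f * (x * (e * f))) := by rw [hf', he']
        _ = e * f * x * (e * f) := by simp only [mul_assoc]
        _ = e * f := hx1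
    · calc f * (x * e) * (e * f) * (f * (x * e))
          = f * (x * (e * (e * (f * (f * (x * e)))))) := by simp only [mul_assoc]
        _ = f * (x * (e * (f * (x * e)))) := by rw [he', hf']
        _ = f * ((x * (e * f) * x) * e) := by simp only [mul_assoc]
        _ = f * (x * e) := by rw [hx2]
  have hxidem : x * x = x := by
    calc x * x = f * (x * e) * (f * (x * e)) := by rw [key]
      _ = f * ((x * (e * f) * x) * e) := by simp only [mul_assoc]
      _ = f * (x * e) := by rw [hx2]
      _ = x := key
  have hef : e * f = st x := hstUniq x (e * f) hx2 hx1
  rw [hef, aux_star_idem st hst1 hst2 hstUniq hxidem, hxidem]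

lemma aux_idem_comm {e f : S} (he : e * e = e) (hf : f * f = f) :
    e * f = f * e := by
  have he' : ∀ z : S, e * (e * z) = e * z := fun z => by rw [← mul_assoc, he]
  have hf' : ∀ z : S, f * (f * z) = f * z := fun z => by rw [← mul_assoc, hf]
  have h1 : (e * f) * (e * f) = e * f := aux_mul_idem st hst1 hst2 hstUniq he hf
  have key : f * e = st (e * f) := by
    refine hstUniq (e * f) (f * e) ?_ ?_
    · calc e * f * (f * e) * (e * f)
          = e * (f * (f * (e * (e * f)))) := by simp only [mul_assoc]
        _ = e * (f * (e * f)) := by rw [hf', he']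
        _ = (e * f) * (e * f) := by simp only [mul_assoc]
        _ = e * f := h1
    · calc f * e * (e * f) * (f * e)
          = f * (e * (e * (f * (f * e)))) := by simp only [mul_assoc]
        _ = f * (e * (f * e)) := by rw [he', hf']
        _ = (f * e) * (f * e) := by simp only [mul_assoc]
        _ = f * e := aux_mul_idem st hst1 hst2 hstUniq hf he
  rw [key, aux_star_idem st hst1 hst2 hstUniq h1]

lemma aux_star_mul (a b : S) : st (a * b) = st b * st a := by
  have hbb : (b * st b) * (b * st b) = b * st b := by
    calc b * st b * (b * st b) = (b * st b * b) * st b := by simp only [mul_assoc]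
      _ = b * st b := by rw [hst1]
  have haa : (st a * a) * (st a * a) = st a * a := by
    calc st a * a * (st a * a) = (st a * a * st a) * a := by simp only [mul_assoc]
      _ = st a * a := by rw [hst2]
  have hcomm := aux_idem_comm st hst1 hst2 hstUniq hbb haa
  refine (hstUniq (a * b) (st b * st a) ?_ ?_).symm
  · calc a * b * (st b * st a) * (a * b)
        = a * ((b * st b) * (st a * a)) * b := by simp only [mul_assoc]
      _ = a * ((st a * a) * (b * st b)) * b := by rw [hcomm]
      _ = (a * st a * a) * (b * st b * b) := by simp only [mul_assoc]
      _ = a * b := by rw [hst1, hst1]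
  · calc st b * st a * (a * b) * (st b * st a)
        = st b * ((st a * a) * (b * st b)) * st a := by simp only [mul_assoc]
      _ = st b * ((b * st b) * (st a * a)) * st a := by rw [hcomm]
      _ = (st b * b * st b) * (st a * a * st a) := by simp only [mul_assoc]
      _ = st b * st a := by rw [hst2, hst2]

end InvSemigroup

/-! ### Finsupp computations -/

section Fsupp
variable {S : Type*} [Semigroup S] (st : S → S)

lemma cmul_cstar_eq (f : S →₀ ℂ) :
    cmul (cstar st f) f
      = f.sum fun s a => f.sum fun t b =>
          Finsupp.single (st s * t) ((starRingEnd ℂ) a * b) := by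
  rw [cmul, cstar, Finsupp.sum_sum_index]
  · refine Finsupp.sum_congr fun s hs => ?_
    rw [Finsupp.sum_single_index]
    simp
  · intro a; simp
  · intro a b₁ b₂; simp [add_mul, Finsupp.single_add, Finsupp.sum_add]

lemma cmul_cstar_mapDomain (T : S → S) (f : S →₀ ℂ) :
    cmul (cstar st (Finsupp.mapDomain T f)) (Finsupp.mapDomain T f)
      = f.sum fun s a => f.sum fun t b =>
          Finsupp.single (st (T s) * T t) ((starRingEnd ℂ) a * b) := by
  rw [cmul_cstar_eq]
  rw [Finsupp.sum_mapDomain_index]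
  · refine Finsupp.sum_congr fun s hs => ?_
    rw [Finsupp.sum_mapDomain_index]
    · intro t; simp
    · intro t b₁ b₂; simp [mul_add, Finsupp.single_add]
  · intro s; simp
  · intro s a₁ a₂
    simp only [map_add, add_mul, Finsupp.single_add]
    rw [Finsupp.sum_add]

end Fsupp

/-! ### The restriction map as an additive homomorphism -/

section Eps
variable {S : Type*} [Semigroup S] (p : S → Prop)

open Classical in
noncomputable def cepsHom : (S →₀ ℂ) →+ (S →₀ ℂ) where
  toFun := ceps p
  map_zero' := by simp [ceps]
  map_add' := fun x y => by
    classical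
    unfold ceps
    refine Finsupp.sum_add_index' (f := x) (g := y)
      (h := fun s a => if p s then Finsupp.single s a else 0) ?_ ?_
    · intro s; split <;> simp
    · intro s a b; split <;> simp [Finsupp.single_add]

lemma ceps_eq_hom (f : S →₀ ℂ) : ceps p f = cepsHom p f := rfl

open Classical in
lemma ceps_single (u : S) (c : ℂ) :
    ceps p (Finsupp.single u c) = if p u then Finsupp.single u c else 0 := by
  unfold ceps
  rw [Finsupp.sum_single_index]
  split <;> simp

open Classical in
lemma sum_filter' {M : Type*} [AddCommMonoid M] (q : S → Prop) (f : S →₀ ℂ)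
    (h : S → ℂ → M) (h0 : ∀ s, h s 0 = 0) :
    (f.filter q).sum h = f.sum fun s a => if q s then h s a else 0 := by
  classical
  rw [Finsupp.sum, Finsupp.sum, Finsupp.support_filter, Finset.sum_filter]
  refine Finset.sum_congr rfl fun s _ => ?_
  by_cases hq : q s <;> simp [Finsupp.filter_apply, hq, h0]

end Eps

/-! ### Part 1 -/

lemma part1 {S G : Type*} [Semigroup S] [Group G] (st : S → S)
    (hst1 : ∀ s, s * st s * s = s)
    (hst2 : ∀ s, st s * s * st s = st s)
    (hstUniq : ∀ s t : S, s * t * s = s → t * s * t = t → t = st s)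
    (φ : S → G) (g : G) (sg : S) (hc : S → S)
    (hcs : ∀ s : S, φ s = g → φ (hc s) = 1 ∧ s = sg * hc s)
    (f : S →₀ ℂ) (hf : ∀ s ∈ f.support, φ s = g) :
    cmul (cstar st (f.sum fun s a => Finsupp.single (st sg * sg * hc s) a))
         (f.sum fun s a => Finsupp.single (st sg * sg * hc s) a)
      = cmul (cstar st f) f := by
  have hmap : (f.sum fun s a => Finsupp.single (st sg * sg * hc s) a)
      = Finsupp.mapDomain (fun s => st sg * sg * hc s) f := rfl
  rw [hmap, cmul_cstar_mapDomain, cmul_cstar_eq]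
  refine Finsupp.sum_congr fun s hs => Finsupp.sum_congr fun t ht => ?_
  have hq : (st sg * sg) * (st sg * sg) = st sg * sg := by
    calc st sg * sg * (st sg * sg) = (st sg * sg * st sg) * sg := by
          simp only [mul_assoc]
      _ = st sg * sg := by rw [hst2]
  obtain ⟨hφs, hws⟩ := hcs s (hf s hs)
  obtain ⟨hφt, hwt⟩ := hcs t (hf t ht)
  congr 1
  conv_rhs => rw [hws, hwt]
  rw [aux_star_mul st hst1 hst2 hstUniq (st sg * sg) (hc s),
    aux_star_idem st hst1 hst2 hstUniq hq,
    aux_star_mul st hst1 hst2 hstUniq sg (hc s)]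
  calc st (hc s) * (st sg * sg) * (st sg * sg * hc t)
      = st (hc s) * (((st sg * sg) * (st sg * sg)) * hc t) := by
        simp only [mul_assoc]
    _ = st (hc s) * ((st sg * sg) * hc t) := by rw [hq]
    _ = st (hc s) * st sg * (sg * hc t) := by simp only [mul_assoc]

/-! ### Fiber decomposition of `ε (f* f)` -/

section EpsQ
variable {S G : Type*} [Semigroup S] [Group G] (st : S → S)
variable (φ : S → G) (hhom : ∀ a b : S, φ (a * b) = φ a * φ b)

include hhom in
lemma phi_star (hst1 : ∀ s, s * st s * s = s) (s : S) : φ (st s) = (φ s)⁻¹ := by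
  have h2 : φ s * φ (st s) * φ s = φ s := by
    rw [← hhom, ← hhom, hst1]
  have h3 : φ s * (φ (st s) * φ s) = φ s * 1 := by rw [mul_one, ← mul_assoc, h2]
  exact eq_inv_of_mul_eq_one_left (mul_left_cancel h3)

open Classical in
include hhom in
lemma eps_Q (hst1 : ∀ s, s * st s * s = s) (g : S →₀ ℂ) :
    ceps (fun s => φ s = 1) (cmul (cstar st g) g)
      = ∑ γ ∈ g.support.image φ,
          cmul (cstar st (g.filter (fun s => φ s = γ)))
               (g.filter (fun s => φ s = γ)) := by
  classical
  rw [cmul_cstar_eq st, ceps_eq_hom, Finsupp.sum, map_sum]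
  simp only [Finsupp.sum, map_sum, ← ceps_eq_hom, ceps_single]
  have hr : ∀ γ : G,
      cmul (cstar st (g.filter (fun s => φ s = γ))) (g.filter (fun s => φ s = γ))
        = g.sum fun s a => if φ s = γ then
            (g.sum fun t b => if φ t = γ then
              Finsupp.single (st s * t) ((starRingEnd ℂ) a * b) else 0) else 0 := by
    intro γ
    rw [cmul_cstar_eq st]
    rw [sum_filter']
    · refine Finsupp.sum_congr fun s hs => ?_
      by_cases hφ : φ s = γ
      · simp only [hφ, if_true]
        rw [sum_filter']
        intro t; simp
      · simp [hφ]
    · intro s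
      simp [Finsupp.sum]
  simp only [hr]
  simp only [Finsupp.sum]
  conv_rhs => rw [Finset.sum_comm]
  refine Finset.sum_congr rfl fun s hs => ?_
  have hmem : φ s ∈ g.support.image φ := Finset.mem_image_of_mem φ hs
  have hswap : ∀ γ ∈ g.support.image φ,
      (if φ s = γ then
        (∑ t ∈ g.support, if φ t = γ then
          Finsupp.single (st s * t) ((starRingEnd ℂ) (g s) * (g t)) else 0) else 0)
      = (if γ = φ s then
        (∑ t ∈ g.support, if φ t = γ then
          Finsupp.single (st s * t) ((starRingEnd ℂ) (g s) * (g t)) else 0) else 0) := by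
    intro γ _
    by_cases h : φ s = γ
    · simp [h]
    · simp [h, Ne.symm h]
  rw [Finset.sum_congr rfl hswap, Finset.sum_ite_eq' (g.support.image φ) (φ s), if_pos hmem]
  refine Finset.sum_congr rfl fun t ht => ?_
  have hcond : (φ (st s * t) = 1) = (φ t = φ s) := by
    rw [hhom, phi_star st φ hhom hst1]
    exact propext ⟨fun h => by
      have := congrArg (fun z => φ s * z) h
      simpa [← mul_assoc] using this, fun h => by rw [h]; simp⟩
  simp only [hcond]

end EpsQ

/-! ### Part 2 -/

set_option maxHeartbeats 1000000 in
lemma part2 {S G : Type*} [Semigroup S] [Group G] (st : S → S)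
    (hst1 : ∀ s, s * st s * s = s)
    (hst2 : ∀ s, st s * s * st s = st s)
    (hstUniq : ∀ s t : S, s * t * s = s → t * s * t = t → t = st s)
    (φ : S → G) (hhom : ∀ a b : S, φ (a * b) = φ a * φ b)
    (hcoset : ∀ g : G, ∃ sg : S, ∀ s : S,
      φ s = g ↔ ∃ h : S, φ h = 1 ∧ s = sg * h) :
    ∀ x : S →₀ ℂ,
      (∃ (n : ℕ) (g : Fin n → (S →₀ ℂ)), x = ∑ i, cmul (cstar st (g i)) (g i)) →
      ∃ (m : ℕ) (h : Fin m → (S →₀ ℂ)),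
        (∀ i, ∀ s ∈ (h i).support, φ s = 1) ∧
        ceps (fun s => φ s = 1) x = ∑ i, cmul (cstar st (h i)) (h i) := by
  classical
  rintro x ⟨n, gg, rfl⟩
  set P : (S →₀ ℂ) → Prop := fun y => ∃ (m : ℕ) (h : Fin m → (S →₀ ℂ)),
    (∀ i, ∀ s ∈ (h i).support, φ s = 1) ∧
    y = ∑ i, cmul (cstar st (h i)) (h i) with hP
  have Pzero : P 0 := ⟨0, fun i => 0, fun i => i.elim0, by simp⟩
  have Padd : ∀ y z, P y → P z → P (y + z) := by
    rintro y z ⟨m₁, h₁, c₁, rfl⟩ ⟨m₂, h₂, c₂, rfl⟩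
    refine ⟨m₁ + m₂, Fin.append h₁ h₂, ?_, ?_⟩
    · intro i
      refine Fin.addCases (motive := fun i =>
        ∀ s ∈ ((Fin.append h₁ h₂) i).support, φ s = 1) ?_ ?_ i
      · intro j; simpa [Fin.append_left] using c₁ j
      · intro j; simpa [Fin.append_right] using c₂ j
    · rw [Fin.sum_univ_add]
      simp only [Fin.append_left, Fin.append_right]
  have Psingle : ∀ y : S →₀ ℂ, (∀ s ∈ y.support, φ s = 1) →
      P (cmul (cstar st y) y) := by
    intro y hy
    exact ⟨1, fun _ => y, fun _ => hy, by simp⟩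
  have PsumF : ∀ (t : Finset (Fin n)) (F : Fin n → (S →₀ ℂ)),
      (∀ j ∈ t, P (F j)) → P (∑ j ∈ t, F j) := by
    intro t F hF
    exact Finset.sum_induction F P Padd Pzero hF
  have PsumG : ∀ (t : Finset G) (F : G → (S →₀ ℂ)),
      (∀ j ∈ t, P (F j)) → P (∑ j ∈ t, F j) := by
    intro t F hF
    exact Finset.sum_induction F P Padd Pzero hF
  have key : ∀ (y : S →₀ ℂ) (γ : G),
      P (cmul (cstar st (y.filter (fun s => φ s = γ)))
              (y.filter (fun s => φ s = γ))) := by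
    intro y γ
    obtain ⟨sg, hsg⟩ := hcoset γ
    set hc : S → S := fun s =>
      if hφ : φ s = γ then Classical.choose ((hsg s).mp hφ) else s with hhc
    have hcs : ∀ s : S, φ s = γ → φ (hc s) = 1 ∧ s = sg * hc s := by
      intro s hφ
      simp only [hhc, dif_pos hφ]
      exact Classical.choose_spec ((hsg s).mp hφ)
    have hsupp : ∀ s ∈ (y.filter (fun s => φ s = γ)).support, φ s = γ := by
      intro s hs
      rw [Finsupp.support_filter, Finset.mem_filter] at hs
      exact hs.2
    have hw := part1 st hst1 hst2 hstUniq φ γ sg hc hcs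
      (y.filter (fun s => φ s = γ)) hsupp
    rw [← hw]
    refine Psingle _ ?_
    intro u hu
    have hmap : ((y.filter (fun s => φ s = γ)).sum fun s a =>
        Finsupp.single (st sg * sg * hc s) a)
        = Finsupp.mapDomain (fun s => st sg * sg * hc s)
            (y.filter (fun s => φ s = γ)) := rfl
    rw [hmap] at hu
    obtain ⟨s, hs, rfl⟩ := Finset.mem_image.mp (Finsupp.mapDomain_support hu)
    have h1 : φ (hc s) = 1 := (hcs s (hsupp s hs)).1
    rw [hhom, hhom, h1, phi_star st φ hhom hst1, mul_one, inv_mul_cancel]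
  have hsum : ceps (fun s => φ s = 1) (∑ i, cmul (cstar st (gg i)) (gg i))
      = ∑ i, ceps (fun s => φ s = 1) (cmul (cstar st (gg i)) (gg i)) := by
    rw [ceps_eq_hom, map_sum]
    simp only [← ceps_eq_hom]
  have hfinal : P (∑ i, ceps (fun s => φ s = 1) (cmul (cstar st (gg i)) (gg i))) := by
    refine PsumF Finset.univ _ fun i _ => ?_
    rw [eps_Q st φ hhom hst1]
    apply PsumG
    intro γ _
    exact key (gg i) γ
  obtain ⟨m, h, hc, he⟩ := hfinal
  exact ⟨m, h, hc, by rw [hsum, he]⟩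

/-- Let `φ : S → G` be a homomorphism of an inverse semigroup `S` onto a group
`G` with `H = φ⁻¹(1)`.  Suppose each fiber is a coset: for each `g ∈ G` there
is `s_g ∈ S` with `φ⁻¹(g) = s_g H`.  Then for every `f ∈ ℂS` supported on
`S_g = φ⁻¹(g)`, setting `f' = Σ_{s ∈ S_g} f(s) s_g* s_g h_s ∈ ℂH`
(where `s = s_g h_s`, `h_s ∈ H`) one has `f'* f' = f* f`; hence the
restriction map `ε : ℂS → ℂH` is positive. -/
theorem stmt_12 {S G : Type*} [Semigroup S] [Group G] (star : S → S)
    (hst1 : ∀ s, s * star s * s = s)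
    (hst2 : ∀ s, star s * s * star s = star s)
    (hstUniq : ∀ s t : S, s * t * s = s → t * s * t = t → t = star s)
    (φ : S → G) (hhom : ∀ a b : S, φ (a * b) = φ a * φ b)
    (hsurj : Function.Surjective φ)
    (hcoset : ∀ g : G, ∃ sg : S, ∀ s : S,
      φ s = g ↔ ∃ h : S, φ h = 1 ∧ s = sg * h) :
    (∀ (g : G) (sg : S) (hc : S → S),
      (∀ s : S, φ s = g → φ (hc s) = 1 ∧ s = sg * hc s) →
      ∀ f : S →₀ ℂ, (∀ s ∈ f.support, φ s = g) →
        cmul (cstar star (f.sum fun s a => Finsupp.single (star sg * sg * hc s) a))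
             (f.sum fun s a => Finsupp.single (star sg * sg * hc s) a)
          = cmul (cstar star f) f) ∧
    (∀ x : S →₀ ℂ,
      (∃ (n : ℕ) (g : Fin n → (S →₀ ℂ)), x = ∑ i, cmul (cstar star (g i)) (g i)) →
      ∃ (m : ℕ) (h : Fin m → (S →₀ ℂ)),
        (∀ i, ∀ s ∈ (h i).support, φ s = 1) ∧
        ceps (fun s => φ s = 1) x = ∑ i, cmul (cstar star (h i)) (h i)) := by
  constructor
  · intro g sg hc hcs f hf
    exact part1 star hst1 hst2 hstUniq φ g sg hc hcs f hf
  · exact part2 star hst1 hst2 hstUniq φ hhom hcoset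
end

section
/- Let S be an inverse semigroup and H an inverse subsemigroup with ↑H = H (H upward closed in the natural partial order). Define the ω-cosets ↑sH = { t ∈ S : te ∈ sH for some idempotent e }. Then the ω-cosets { ↑sH : s ∈ S } partition S: every element belongs to ↑sH for some s (namely its own), and any two ω-cosets are either equal or disjoint. -/
/-- The ω-coset `↑sH = { t : t e ∈ s H for some idempotent e }` of an inverse
subsemigroup `H` of an inverse semigroup `S`. -/
def omegaCoset {S : Type*} [Semigroup S] (H : Set S) (s : S) : Set S :=
  {t : S | ∃ e : S, e * e = e ∧ ∃ h ∈ H, t * e = s * h}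

/-- Let `S` be an inverse semigroup and `H` an inverse subsemigroup (closed
under products and the involution, and containing all idempotents) which is
upward closed in the natural partial order (`↑H = H`).  Then the ω-cosets
`↑sH` partition `S`: every element lies in its own ω-coset, and any two
ω-cosets are either equal or disjoint. -/
theorem stmt_19 {S : Type*} [Semigroup S] (star : S → S)
    (hst1 : ∀ s, s * star s * s = s)
    (hst2 : ∀ s, star s * s * star s = star s)
    (hstUniq : ∀ s t : S, s * t * s = s → t * s * t = t → t = star s)
    (H : Set S)
    (hHmul : ∀ a ∈ H, ∀ b ∈ H, a * b ∈ H)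
    (hHstar : ∀ a ∈ H, star a ∈ H)
    (hHidem : ∀ e : S, e * e = e → e ∈ H)
    (hHup : ∀ h ∈ H, ∀ (s e : S), e * e = e → h = s * e → s ∈ H) :
    (∀ s : S, s ∈ omegaCoset H s) ∧
    (∀ s t : S, (omegaCoset H s ∩ omegaCoset H t).Nonempty →
      omegaCoset H s = omegaCoset H t) := by
  -- `star s * s` is idempotent
  have hidem_ss : ∀ s : S, (star s * s) * (star s * s) = star s * s := by
    intro s
    calc (star s * s) * (star s * s) = star s * (s * star s * s) := by simp [mul_assoc]
      _ = star s * s := by rw [hst1]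
  -- `s * star s` is idempotent
  have hidem_sst : ∀ s : S, (s * star s) * (s * star s) = s * star s := by
    intro s
    calc (s * star s) * (s * star s) = (s * star s * s) * star s := by simp [mul_assoc]
      _ = s * star s := by rw [hst1]
  have hstar_star : ∀ s : S, star (star s) = s := fun s =>
    (hstUniq (star s) s (hst2 s) (hst1 s)).symm
  have hstar_idem : ∀ e : S, e * e = e → star e = e := by
    intro e he
    have h3 : e * e * e = e := by rw [he, he]
    exact (hstUniq e e h3 h3).symm
  -- product of idempotents is idempotent
  have hprod : ∀ e f : S, e * e = e → f * f = f → (e * f) * (e * f) = e * f := by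
    intro e f he hf
    have key : star (e*f) * (e * (f * (star (e*f) * e))) = star (e*f) * e := by
      calc star (e*f) * (e * (f * (star (e*f) * e)))
          = (star (e*f) * (e*f) * star (e*f)) * e := by simp [mul_assoc]
        _ = star (e*f) * e := by rw [hst2]
    have h1 : (f*(star (e*f)*e)) * (f*(star (e*f)*e)) = f*(star (e*f)*e) := by
      calc (f*(star (e*f)*e)) * (f*(star (e*f)*e))
          = f * (star (e*f) * (e * (f * (star (e*f) * e)))) := by simp [mul_assoc]
        _ = f * (star (e*f) * e) := by rw [key]
    have h2 : (e*f) * (f*(star (e*f)*e)) * (e*f) = e*f := by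
      calc (e*f) * (f*(star (e*f)*e)) * (e*f)
          = e * ((f*f) * (star (e*f) * ((e*e) * f))) := by simp [mul_assoc]
        _ = e * (f * (star (e*f) * (e * f))) := by rw [he, hf]
        _ = (e*f) * star (e*f) * (e*f) := by simp [mul_assoc]
        _ = e*f := hst1 (e*f)
    have h3 : (f*(star (e*f)*e)) * (e*f) * (f*(star (e*f)*e)) = f*(star (e*f)*e) := by
      calc (f*(star (e*f)*e)) * (e*f) * (f*(star (e*f)*e))
          = f * (star (e*f) * ((e*e) * ((f*f) * (star (e*f) * e)))) := by simp [mul_assoc]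
        _ = f * (star (e*f) * (e * (f * (star (e*f) * e)))) := by rw [he, hf]
        _ = f * (star (e*f) * e) := by rw [key]
    have ha : f*(star (e*f)*e) = star (e*f) := hstUniq (e*f) _ h2 h3
    have haidem : star (e*f) * star (e*f) = star (e*f) := by rw [← ha]; exact h1
    have heq : star (star (e*f)) = star (e*f) := hstar_idem _ haidem
    rw [hstar_star] at heq
    rw [heq]; exact haidem
  -- idempotents commute
  have hcomm : ∀ e f : S, e * e = e → f * f = f → f * e = e * f := by
    intro e f he hf
    have hef := hprod e f he hf
    have hfe := hprod f e hf he
    have h2 : (e*f)*(f*e)*(e*f) = e*f := by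
      calc (e*f)*(f*e)*(e*f) = e*((f*f)*((e*e)*f)) := by simp [mul_assoc]
        _ = e*(f*(e*f)) := by rw [he, hf]
        _ = (e*f)*(e*f) := by simp [mul_assoc]
        _ = e*f := hef
    have h3 : (f*e)*(e*f)*(f*e) = f*e := by
      calc (f*e)*(e*f)*(f*e) = f*((e*e)*((f*f)*e)) := by simp [mul_assoc]
        _ = f*(e*(f*e)) := by rw [he, hf]
        _ = (f*e)*(f*e) := by simp [mul_assoc]
        _ = f*e := hfe
    have hfin := hstUniq (e*f) (f*e) h2 h3
    have hsef : star (e*f) = e*f := hstar_idem _ hef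
    rw [hsef] at hfin; exact hfin
  -- star is an antihomomorphism
  have hstar_mul : ∀ a b : S, star (a * b) = star b * star a := by
    intro a b
    have hc := hcomm (b*star b) (star a * a) (hidem_sst b) (hidem_ss a)
    have h2 : (a*b)*(star b*star a)*(a*b) = a*b := by
      calc (a*b)*(star b*star a)*(a*b)
          = a*((b*star b)*(star a*a)*b) := by simp [mul_assoc]
        _ = a*((star a*a)*(b*star b)*b) := by rw [← hc]
        _ = (a*star a*a)*(b*star b*b) := by simp [mul_assoc]
        _ = a*b := by rw [hst1 a, hst1 b]
    have h3 : (star b*star a)*(a*b)*(star b*star a) = star b*star a := by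
      calc (star b*star a)*(a*b)*(star b*star a)
          = star b*((star a*a)*(b*star b)*star a) := by simp [mul_assoc]
        _ = star b*((b*star b)*(star a*a)*star a) := by rw [hc]
        _ = (star b*b*star b)*(star a*a*star a) := by simp [mul_assoc]
        _ = star b*star a := by rw [hst2 a, hst2 b]
    exact (hstUniq (a*b) (star b*star a) h2 h3).symm
  -- conjugation of an idempotent
  have hconj : ∀ x f : S, f * f = f →
      ((star x * (f * x)) * (star x * (f * x)) = star x * (f * x)) ∧
      (x * (star x * (f * x)) = f * x) := by
    intro x f hf
    have hc := hcomm f (x * star x) hf (hidem_sst x)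
    constructor
    · calc (star x * (f * x)) * (star x * (f * x))
          = star x * ((f * (x * star x)) * (f * x)) := by simp [mul_assoc]
        _ = star x * (((x * star x) * f) * (f * x)) := by rw [← hc]
        _ = (star x * x * star x) * ((f * f) * x) := by simp [mul_assoc]
        _ = star x * (f * x) := by rw [hst2, hf]
    · calc x * (star x * (f * x))
          = ((x * star x) * f) * x := by simp [mul_assoc]
        _ = (f * (x * star x)) * x := by rw [hc]
        _ = f * (x * star x * x) := by simp [mul_assoc]
        _ = f * x := by rw [hst1]
  -- membership characterization
  have hmem : ∀ s t : S, t ∈ omegaCoset H s ↔ star s * t ∈ H := by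
    intro s t
    constructor
    · rintro ⟨e, he, h, hh, heq⟩
      have h1 : (star s * t) * e = (star s * s) * h := by
        rw [mul_assoc, heq, ← mul_assoc]
      have h2 : (star s * s) * h ∈ H := hHmul _ (hHidem _ (hidem_ss s)) _ hh
      rw [← h1] at h2
      exact hHup _ h2 _ e he rfl
    · intro hh
      refine ⟨star t * ((s * star s) * t), (hconj t (s*star s) (hidem_sst s)).1,
        star s * t, hh, ?_⟩
      have h2 := (hconj t (s*star s) (hidem_sst s)).2
      rw [h2, mul_assoc]
  -- transitivity
  have htrans : ∀ s u t : S, star s * u ∈ H → star u * t ∈ H → star s * t ∈ H := by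
    intro s u t h1 h2
    have h3 : (star s * u) * (star u * t) ∈ H := hHmul _ h1 _ h2
    have h4 : (star s * u) * (star u * t) = (star s * t) * (star t * ((u * star u) * t)) := by
      have hc := (hconj t (u * star u) (hidem_sst u)).2
      calc (star s * u) * (star u * t) = star s * ((u * star u) * t) := by simp [mul_assoc]
        _ = star s * (t * (star t * ((u*star u)*t))) := by rw [hc]
        _ = (star s * t) * (star t * ((u*star u)*t)) := by simp [mul_assoc]
    rw [h4] at h3
    exact hHup _ h3 _ _ (hconj t (u*star u) (hidem_sst u)).1 rfl
  -- symmetry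
  have hsymmH : ∀ s t : S, star s * t ∈ H → star t * s ∈ H := by
    intro s t h
    have h' := hHstar _ h
    rwa [hstar_mul, hstar_star] at h'
  constructor
  · intro s
    exact ⟨star s * s, hidem_ss s, star s * s, hHidem _ (hidem_ss s), rfl⟩
  · intro s t hne
    obtain ⟨u, hus, hut⟩ := hne
    have h1 : star s * u ∈ H := (hmem s u).1 hus
    have h2 : star t * u ∈ H := (hmem t u).1 hut
    have hst : star s * t ∈ H := htrans s u t h1 (hsymmH t u h2)
    have hts : star t * s ∈ H := hsymmH s t hst
    ext x
    rw [hmem, hmem]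
    exact ⟨fun h => htrans t s x hts h, fun h => htrans s t x hst h⟩
end
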